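/- arXiv:2509.26079 — 3 statements merged into one kernel-verified Lean document; each statement's English description precedes it below -/
import Mathlib

section
/- The function W(r) = n^{2−n} (∑_{k=1}^n 1/r_k^2)^{n/2} · (2π)^n ∏_{k=1}^n r_k, defined on unit vectors r ∈ R^n_{>0} with ∑ r_k^2 = 1, attains its minimum value n^2 (2π/√n)^n exactly at r = (1/√n, ..., 1/√n). -/
/-!
AM–GM applied to the numbers `1 / r k ^ 2` with equal weights `1 / n` gives
`(∑ 1 / r k ^ 2) / n ≥ (∏ r k) ^ (-2 / n)`, i.e. `(∑ 1 / r k ^ 2) ^ (n / 2) * ∏ r k ≥ n ^ (n / 2)`,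
with equality exactly when all `r k` coincide; on the unit sphere that means `r k = 1 / √n`.
Multiplying by `n ^ (2 - n) * (2π) ^ n` turns `n ^ (n / 2)` into `n ^ 2 * (2π / √n) ^ n`.
-/

open Real Finset

section InverseSquares

variable {ι : Type*} [Fintype ι] {r : ι → ℝ}

theorem geom_mean_inv_sq_rpow_half_card (hr : ∀ i, 0 < r i) :
    (∏ i, (1 / r i ^ 2) ^ (Fintype.card ι : ℝ)⁻¹) ^ ((Fintype.card ι : ℝ) / 2) =
      (∏ i, r i)⁻¹ := by
  rw [← Real.finsetProd_rpow _ _ (fun i _ => by have := hr i; positivity), ← prod_inv_distrib]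
  refine prod_congr rfl fun i _ => ?_
  have : Nonempty ι := ⟨i⟩
  have hexp : (Fintype.card ι : ℝ)⁻¹ * ((Fintype.card ι : ℝ) / 2) = ((2 : ℕ) : ℝ)⁻¹ := by
    field_simp; norm_num
  rw [← rpow_mul (by have := hr i; positivity), hexp, one_div, ← inv_pow,
    pow_rpow_inv_natCast (inv_nonneg.2 (hr i).le) two_ne_zero]

theorem forall_eq_iff_eq_inv_sqrt_card (hr : ∀ i, 0 < r i) (hnorm : ∑ i, r i ^ 2 = 1) :
    (∀ i j, r i = r j) ↔ ∀ i, r i = 1 / √(Fintype.card ι) := by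
  refine ⟨fun hconst i => ?_, fun h i j => by rw [h i, h j]⟩
  have hsq : (Fintype.card ι : ℝ) * r i ^ 2 = 1 := by
    rw [← hnorm, sum_congr rfl fun j _ => by rw [hconst j i], sum_const, card_univ, nsmul_eq_mul]
  rw [← sqrt_sq (hr i).le, eq_one_div_of_mul_eq_one_right hsq, sqrt_div' 1 (Nat.cast_nonneg _),
    sqrt_one]

variable [Nonempty ι]

theorem arith_mean_inv_sq_rpow_half_card :
    (∑ i, (Fintype.card ι : ℝ)⁻¹ * (1 / r i ^ 2)) ^ ((Fintype.card ι : ℝ) / 2) =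
      (∑ i, 1 / r i ^ 2) ^ ((Fintype.card ι : ℝ) / 2) /
        (Fintype.card ι : ℝ) ^ ((Fintype.card ι : ℝ) / 2) := by
  rw [← mul_sum, inv_mul_eq_div, div_rpow (sum_nonneg fun i _ => by positivity) (by positivity)]

theorem card_rpow_half_le_sum_inv_sq_rpow_mul_prod (hr : ∀ i, 0 < r i) :
    (Fintype.card ι : ℝ) ^ ((Fintype.card ι : ℝ) / 2) ≤
      (∑ i, 1 / r i ^ 2) ^ ((Fintype.card ι : ℝ) / 2) * ∏ i, r i := by
  have amgm := geom_mean_le_arith_mean_weighted univ (fun _ => (Fintype.card ι : ℝ)⁻¹)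
    (fun i => 1 / r i ^ 2) (fun _ _ => by positivity) (by simp) (fun _ _ => by positivity)
  have hpow := rpow_le_rpow (by positivity) amgm (by positivity : 0 ≤ (Fintype.card ι : ℝ) / 2)
  rw [geom_mean_inv_sq_rpow_half_card hr, arith_mean_inv_sq_rpow_half_card,
    le_div_iff₀ (by positivity), inv_mul_le_iff₀ (prod_pos fun i _ => hr i)] at hpow
  linarith

theorem sum_inv_sq_rpow_mul_prod_eq_card_rpow_half_iff (hr : ∀ i, 0 < r i) :
    (∑ i, 1 / r i ^ 2) ^ ((Fintype.card ι : ℝ) / 2) * ∏ i, r i =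
        (Fintype.card ι : ℝ) ^ ((Fintype.card ι : ℝ) / 2) ↔ ∀ i j, r i = r j := by
  have amgm := geom_mean_eq_arith_mean_weighted_iff_of_pos univ (fun _ => (Fintype.card ι : ℝ)⁻¹)
    (fun i => 1 / r i ^ 2) (fun _ _ => by positivity) (by simp) (fun _ _ => by positivity)
  have hexp : (Fintype.card ι : ℝ) / 2 ≠ 0 := by positivity
  rw [← rpow_left_inj (by positivity) (by positivity) hexp,
    geom_mean_inv_sq_rpow_half_card hr, arith_mean_inv_sq_rpow_half_card,
    eq_div_iff (by positivity), inv_mul_eq_iff_eq_mul₀ (prod_pos fun i _ => hr i).ne'] at amgm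
  rw [eq_comm, mul_comm, amgm]
  simp only [mem_univ, forall_const, one_div, inv_inj]
  exact forall₂_congr fun i j => pow_left_inj₀ (hr i).le (hr j).le two_ne_zero

end InverseSquares

theorem rpow_two_sub_mul_pow_mul_rpow_half {x : ℝ} (hx : 0 < x) (m : ℕ) (c : ℝ) :
    x ^ ((2 : ℝ) - m) * c ^ m * x ^ ((m : ℝ) / 2) = x ^ 2 * (c / √x) ^ m := by
  have hsqrt : √x ^ m = x ^ ((m : ℝ) / 2) := by
    rw [sqrt_eq_rpow, ← rpow_natCast, ← rpow_mul hx.le, one_div_mul_eq_div]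
  have hexp : x ^ ((2 : ℝ) - m) * x ^ ((m : ℝ) / 2) * x ^ ((m : ℝ) / 2) = x ^ 2 := by
    rw [← rpow_add hx, ← rpow_add hx, ← rpow_two]; ring_nf
  rw [div_pow, hsqrt]
  field_simp
  linear_combination c ^ m * hexp

/-- The function
W(r) = n^{2−n} (∑ 1/r_k²)^{n/2} (2π)^n ∏ r_k, on unit vectors r with positive entries,
attains its minimum value n²(2π/√n)^n exactly at r = (1/√n, …, 1/√n). -/
theorem W_min (n : ℕ) (hn : 0 < n) (r : Fin n → ℝ)
    (hr_pos : ∀ i, 0 < r i) (hr : ∑ i, (r i) ^ 2 = 1) :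
    (n : ℝ) ^ 2 * (2 * π / Real.sqrt n) ^ n ≤
      (n : ℝ) ^ ((2 : ℝ) - n) * (∑ k, 1 / (r k) ^ 2) ^ ((n : ℝ) / 2) *
        (2 * π) ^ n * ∏ k, r k ∧
    ((n : ℝ) ^ ((2 : ℝ) - n) * (∑ k, 1 / (r k) ^ 2) ^ ((n : ℝ) / 2) *
        (2 * π) ^ n * ∏ k, r k = (n : ℝ) ^ 2 * (2 * π / Real.sqrt n) ^ n ↔
      ∀ k, r k = 1 / Real.sqrt n) := by
  have : Nonempty (Fin n) := Fin.pos_iff_nonempty.1 hn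
  have hle := card_rpow_half_le_sum_inv_sq_rpow_mul_prod hr_pos
  have heq := sum_inv_sq_rpow_mul_prod_eq_card_rpow_half_iff hr_pos
  have hunit := forall_eq_iff_eq_inv_sqrt_card hr_pos hr
  simp only [Fintype.card_fin] at hle heq hunit
  have hfactor : 0 < (n : ℝ) ^ ((2 : ℝ) - n) * (2 * π) ^ n := by positivity
  rw [← rpow_two_sub_mul_pow_mul_rpow_half (Nat.cast_pos.2 hn),
    show ∀ a b c d : ℝ, a * b * c * d = a * c * (b * d) from fun a b c d => by ring,
    mul_le_mul_iff_right₀ hfactor, mul_right_inj' hfactor.ne', heq, hunit]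
  exact ⟨hle, Iff.rfl⟩
end

section
/- The unit vectors r_{L_1} = (1/(20√30))·(48,56,−76,28) and r_{L_2} = (1/(44√6))·(36,92,−16,−40) both have Euclidean norm 1, and no permutation and sign change of coordinates carries r_{L_1} to r_{L_2}; in particular r_{L_1} ≠ ±(r_{L_2} ∘ σ) for every permutation σ of 4 letters and choice of signs. -/
/-! A change of signs and order of the coordinates preserves the multiset of squared coordinates.
The first coordinate of `r_{L_1}` has square `48² / 12000 = 24 / 125`, whose reduced denominator
is divisible by `5`, whereas every squared coordinate of `r_{L_2}` is `k² / 11616` with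
`11616 = 2⁵ · 3 · 11²` prime to `5`. -/

lemma sq_apply_eq_sq_apply_of_eq_sign_mul {ι R : Type*} [CommRing R] {f g ε : ι → R}
    {σ : ι → ι} (hε : ∀ i, ε i = 1 ∨ ε i = -1) (h : ∀ i, f i = ε i * g (σ i)) (i : ι) :
    f i ^ 2 = g (σ i) ^ 2 := by
  rcases hε i with hi | hi <;> simp [h i, hi]

lemma one_div_mul_sqrt_mul_sq (c n a : ℝ) (hn : 0 ≤ n) :
    (1 / (c * Real.sqrt n) * a) ^ 2 = a ^ 2 / (c ^ 2 * n) := by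
  rw [one_div_mul_eq_div, div_pow, mul_pow, Real.sq_sqrt hn]

/-- The unit vectors r_{L_1} = (1/(20√30))(48,56,−76,28) and
r_{L_2} = (1/(44√6))(36,92,−16,−40) both have norm 1, and no permutation and sign
change of coordinates carries r_{L_1} to r_{L_2}. -/
theorem rL1_rL2_inequivalent :
    let r1 : Fin 4 → ℝ := fun i =>
      (1 / (20 * Real.sqrt 30)) * ![48, 56, -76, 28] i
    let r2 : Fin 4 → ℝ := fun i =>
      (1 / (44 * Real.sqrt 6)) * ![36, 92, -16, -40] i
    (∑ i, (r1 i) ^ 2 = 1) ∧ (∑ i, (r2 i) ^ 2 = 1) ∧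
      ∀ (σ : Equiv.Perm (Fin 4)) (ε : Fin 4 → ℝ),
        (∀ i, ε i = 1 ∨ ε i = -1) → ¬(∀ i, r1 i = ε i * r2 (σ i)) := by
  intro r1 r2
  have hr1 : ∀ i, r1 i ^ 2 = (![48, 56, -76, 28] i : ℝ) ^ 2 / 12000 := fun i => by
    rw [one_div_mul_sqrt_mul_sq _ _ _ (by norm_num)]; norm_num
  have hr2 : ∀ i, r2 i ^ 2 = (![36, 92, -16, -40] i : ℝ) ^ 2 / 11616 := fun i => by
    rw [one_div_mul_sqrt_mul_sq _ _ _ (by norm_num)]; norm_num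
  refine ⟨?_, ?_, fun σ ε hε h => ?_⟩
  · simp only [hr1, Fin.sum_univ_four, Matrix.cons_val]; norm_num
  · simp only [hr2, Fin.sum_univ_four, Matrix.cons_val]; norm_num
  · have hsq := sq_apply_eq_sq_apply_of_eq_sign_mul hε h 0
    rw [hr1, hr2] at hsq
    generalize σ 0 = j at hsq
    fin_cases j <;> norm_num at hsq
end

section
/- Every finite subgroup of SO(4) acting freely on S^3 with abelian image is cyclic: if Γ ⊆ SO(4) is a finite abelian group acting freely on the unit sphere S^3 ⊂ R^4, then Γ is cyclic. -/
/-!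
The matrices of Γ commute, so they generate a commutative finite-dimensional subalgebra `B` of
`M₄(ℝ)`. Freeness says that `A - 1` is invertible for `A ≠ 1`, and it stays invertible in `B`
because `B` is Artinian. Hence no `A ≠ 1` becomes `1` modulo a maximal ideal `m` of `B`, so `Γ`
embeds into the multiplicative group of the field `B ⧸ m`, whose finite subgroups are cyclic.
-/

open Finset Matrix

theorem isCyclic_of_isUnit_sub_one {R G : Type*} [CommRing R] [Nontrivial R] [Group G] [Finite G]
    (ρ : G →* R) (hρ : ∀ g, g ≠ 1 → IsUnit (ρ g - 1)) : IsCyclic G := by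
  obtain ⟨m, hm⟩ := Ideal.exists_maximal R
  let χ : G →* R ⧸ m := (Ideal.Quotient.mk m).toMonoidHom.comp ρ
  have hker : ∀ g, χ g = 1 → g = 1 := by
    intro g hg
    by_contra hg1
    have hmem : ρ g - 1 ∈ m := by
      rw [← Ideal.Quotient.eq, map_one]
      exact hg
    exact hm.ne_top (m.eq_top_of_isUnit_mem hmem (hρ g hg1))
  have hinj : Function.Injective χ := Units.val_injective.comp <|
    (injective_iff_map_eq_one χ.toHomUnits).2 fun g hg => hker g (congrArg Units.val hg)
  exact isCyclic_of_injective_ringHom χ hinj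

theorem Subalgebra.isUnit_of_isUnit_val {K A : Type*} [Field K] [Ring A] [Algebra K A]
    [FiniteDimensional K A] (B : Subalgebra K A) {b : B} (hb : IsUnit (b : A)) : IsUnit b := by
  have : IsArtinianRing B := isArtinian_of_tower K inferInstance
  have hreg := hb.isRegular
  rw [IsArtinianRing.isUnit_iff_isRegular]
  exact ⟨fun x y h => Subtype.ext (hreg.1 (congrArg Subtype.val h)),
    fun x y h => Subtype.ext (hreg.2 (congrArg Subtype.val h))⟩

open scoped IsMulCommutative in
theorem isCyclic_of_isUnit_sub_one_of_commute {K A G : Type*} [Field K] [Ring A] [Nontrivial A]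
    [Algebra K A] [FiniteDimensional K A] [Group G] [Finite G] (ρ : G →* A)
    (hcomm : ∀ g h, Commute (ρ g) (ρ h)) (hρ : ∀ g, g ≠ 1 → IsUnit (ρ g - 1)) : IsCyclic G := by
  let B := Algebra.adjoin K (Set.range ρ)
  have : IsMulCommutative B := Algebra.isMulCommutative_adjoin K <| by
    rintro _ ⟨g, rfl⟩ _ ⟨h, rfl⟩
    exact hcomm g h
  let ρB : G →* B := ρ.codRestrict B.toSubmonoid fun g => Algebra.subset_adjoin ⟨g, rfl⟩
  exact isCyclic_of_isUnit_sub_one ρB fun g hg => B.isUnit_of_isUnit_val (hρ g hg)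

theorem Matrix.isUnit_sub_one_of_forall_mulVec_ne {ι : Type*} [Fintype ι] [DecidableEq ι]
    (A : Matrix ι ι ℝ) (hA : ∀ x : ι → ℝ, ∑ i, x i ^ 2 = 1 → A *ᵥ x ≠ x) : IsUnit (A - 1) := by
  rw [isUnit_iff_isUnit_det, isUnit_iff_ne_zero]
  intro hdet
  obtain ⟨v, hv0, hv⟩ := exists_mulVec_eq_zero_iff.mpr hdet
  rw [sub_mulVec, one_mulVec, sub_eq_zero] at hv
  have hpos : 0 < ∑ i, v i ^ 2 := by
    obtain ⟨i, hi⟩ := Function.ne_iff.mp hv0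
    exact sum_pos' (fun j _ => sq_nonneg (v j)) ⟨i, mem_univ i, pow_two_pos_of_ne_zero hi⟩
  apply hA ((√(∑ i, v i ^ 2))⁻¹ • v)
  · simp only [Pi.smul_apply, smul_eq_mul, mul_pow, ← mul_sum, inv_pow,
      Real.sq_sqrt hpos.le]
    exact inv_mul_cancel₀ hpos.ne'
  · rw [mulVec_smul, hv]

theorem finite_abelian_free_subgroup_SO4_is_cyclic_general
    (Γ : Subgroup (Matrix.orthogonalGroup (Fin 4) ℝ)) [Finite Γ]
    (habelian : ∀ a b : Γ, a * b = b * a)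
    (hfree : ∀ A : Γ, A ≠ 1 → ∀ x : Fin 4 → ℝ, (∑ i, (x i) ^ 2 = 1) →
      Matrix.mulVec ((A : Matrix.orthogonalGroup (Fin 4) ℝ) :
        Matrix (Fin 4) (Fin 4) ℝ) x ≠ x) :
    IsCyclic Γ := by
  let ρ : Γ →* Matrix (Fin 4) (Fin 4) ℝ :=
    (Matrix.orthogonalGroup (Fin 4) ℝ).subtype.comp Γ.subtype
  refine isCyclic_of_isUnit_sub_one_of_commute (K := ℝ) ρ (fun a b => ?_) fun A hA => ?_
  · rw [Commute, SemiconjBy, ← map_mul, ← map_mul, habelian]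
  · exact Matrix.isUnit_sub_one_of_forall_mulVec_ne _ (hfree A hA)

/-- A finite abelian subgroup of SO(4) acting freely on S³ is cyclic. -/
theorem finite_abelian_free_subgroup_SO4_is_cyclic
    (Γ : Subgroup (Matrix.orthogonalGroup (Fin 4) ℝ)) [Finite Γ]
    (habelian : ∀ a b : Γ, a * b = b * a)
    (hdet : ∀ A : Γ, ((A : Matrix.orthogonalGroup (Fin 4) ℝ) :
      Matrix (Fin 4) (Fin 4) ℝ).det = 1)
    (hfree : ∀ A : Γ, A ≠ 1 → ∀ x : Fin 4 → ℝ, (∑ i, (x i) ^ 2 = 1) →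
      Matrix.mulVec ((A : Matrix.orthogonalGroup (Fin 4) ℝ) :
        Matrix (Fin 4) (Fin 4) ℝ) x ≠ x) :
    IsCyclic Γ :=
  finite_abelian_free_subgroup_SO4_is_cyclic_general Γ habelian hfree
end
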